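/- arXiv:1208.2390 — 6 statements merged into one kernel-verified Lean document; each statement's English description precedes it below -/
import Mathlib

section
/- Let $A = A_1 \oplus A_2$ where $A_1, A_2$ are Prüfer $p$-groups (quasicyclic $p$-groups). Then the set of subgroups $B$ of $A$ such that $A/B$ is a Prüfer $p$-group has cardinality continuum. -/
/-- The group `ℚ/ℤ`. -/
abbrev QModZ : Type := ℚ ⧸ AddSubgroup.zmultiples (1 : ℚ)

/-- The Prüfer `p`-group `ℤ(p^∞)`, realized as the `p`-primary part of `ℚ/ℤ`. -/
def pruferSubgroup (p : ℕ) : AddSubgroup QModZ where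
  carrier := {x | ∃ n : ℕ, ((p : ℤ) ^ n) • x = 0}
  zero_mem' := ⟨0, smul_zero _⟩
  add_mem' := by
    rintro a b ⟨m, hm⟩ ⟨n, hn⟩
    refine ⟨m + n, ?_⟩
    have ha : ((p : ℤ) ^ (m + n)) • a = 0 := by
      rw [pow_add, mul_comm, mul_smul, hm, smul_zero]
    have hb : ((p : ℤ) ^ (m + n)) • b = 0 := by
      rw [pow_add, mul_smul, hn, smul_zero]
    rw [smul_add, ha, hb, add_zero]
  neg_mem' := by
    rintro a ⟨n, hn⟩
    exact ⟨n, by rw [smul_neg, hn, neg_zero]⟩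

/-- A group is a Prüfer (quasicyclic) `p`-group if it is isomorphic to `ℤ(p^∞)`. -/
def IsPrufer (p : ℕ) (A : Type*) [AddCommGroup A] : Prop :=
  Nonempty (A ≃+ pruferSubgroup p)

/-!
Every homomorphism `α : A₁ → A₂` has a graph `{(a, α a)}` with quotient `A₂`, and distinct
homomorphisms have distinct graphs, so it suffices to find continuum many homomorphisms between
two Prüfer groups. A binary sequence `ε` gives the `p`-adic integer `∑ εᵢ pⁱ`, which acts on any
`p`-primary group through its truncations; testing on elements of order `pⁱ⁺¹` recovers the
digits one by one. The upper bound holds because `A₁ × A₂` is countable.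
-/

open Cardinal Function

/-- The truncations `∑_{i<n} εᵢ pⁱ` of the `p`-adic integer with binary digits `ε`. -/
def digitSum (p : ℕ) (ε : ℕ → Bool) (n : ℕ) : ℤ :=
  ∑ i ∈ Finset.range n, ((ε i).toNat : ℤ) * (p : ℤ) ^ i

lemma pow_dvd_digitSum_sub (p : ℕ) (ε : ℕ → Bool) {n m : ℕ} (h : n ≤ m) :
    (p : ℤ) ^ n ∣ digitSum p ε m - digitSum p ε n := by
  rw [digitSum, digitSum, ← Finset.sum_range_add_sum_Ico _ h, add_sub_cancel_left]
  exact Finset.dvd_sum fun i hi => Dvd.dvd.mul_left (pow_dvd_pow _ (Finset.mem_Ico.mp hi).1) _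

lemma digitSum_succ_sub_digitSum_succ (p : ℕ) {ε ε' : ℕ → Bool} {i : ℕ}
    (h : ∀ j < i, ε j = ε' j) :
    digitSum p ε (i + 1) - digitSum p ε' (i + 1) =
      (((ε i).toNat : ℤ) - (ε' i).toNat) * (p : ℤ) ^ i := by
  have hi : digitSum p ε i = digitSum p ε' i :=
    Finset.sum_congr rfl fun j hj => by rw [h j (Finset.mem_range.mp hj)]
  rw [digitSum, digitSum, Finset.sum_range_succ, Finset.sum_range_succ, ← digitSum, ← digitSum,
    hi]
  ring

section PrimaryGroup

variable {p : ℕ} {A : Type*} [AddCommGroup A]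

lemma digitSum_smul_eq_of_pow_smul_eq_zero (ε : ℕ → Bool) {x : A} {n m : ℕ}
    (hn : p ^ n • x = 0) (hm : p ^ m • x = 0) : digitSum p ε n • x = digitSum p ε m • x := by
  wlog h : n ≤ m generalizing n m
  · exact (this hm hn (le_of_not_ge h)).symm
  obtain ⟨k, hk⟩ := pow_dvd_digitSum_sub p ε h
  rw [eq_comm, ← sub_eq_zero, ← sub_smul, hk, mul_comm, mul_smul, ← Nat.cast_pow, natCast_zsmul,
    hn, smul_zero]

noncomputable def digitSMulHom (hA : ∀ x : A, ∃ n : ℕ, p ^ n • x = 0) (ε : ℕ → Bool) :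
    A →+ A :=
  AddMonoidHom.mk' (fun x => digitSum p ε (hA x).choose • x) fun x y => by
    obtain ⟨n, hn⟩ := hA x
    obtain ⟨m, hm⟩ := hA y
    have hx : p ^ (n + m) • x = 0 := by rw [pow_add, mul_comm, mul_smul, hn, smul_zero]
    have hy : p ^ (n + m) • y = 0 := by rw [pow_add, mul_smul, hm, smul_zero]
    have hxy : p ^ (n + m) • (x + y) = 0 := by rw [smul_add, hx, hy, add_zero]
    rw [digitSum_smul_eq_of_pow_smul_eq_zero ε (hA _).choose_spec hxy,
      digitSum_smul_eq_of_pow_smul_eq_zero ε (hA x).choose_spec hx,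
      digitSum_smul_eq_of_pow_smul_eq_zero ε (hA y).choose_spec hy, smul_add]

lemma digitSMulHom_apply (hA : ∀ x : A, ∃ n : ℕ, p ^ n • x = 0) (ε : ℕ → Bool) {x : A} {n : ℕ}
    (hn : p ^ n • x = 0) : digitSMulHom hA ε x = digitSum p ε n • x :=
  digitSum_smul_eq_of_pow_smul_eq_zero ε (hA x).choose_spec hn

theorem digitSMulHom_injective (hp : 1 < p) (hA : ∀ x : A, ∃ n : ℕ, p ^ n • x = 0)
    (hord : ∀ n, ∃ x : A, addOrderOf x = p ^ n) : Injective (digitSMulHom hA) := by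
  intro ε ε' h
  funext i
  induction i using Nat.strong_induction_on with
  | _ i ih =>
  obtain ⟨x, hx⟩ := hord (i + 1)
  have hkill : p ^ (i + 1) • x = 0 := hx ▸ addOrderOf_nsmul_eq_zero x
  have hne : p ^ i • x ≠ 0 := by
    rw [Ne, ← addOrderOf_dvd_iff_nsmul_eq_zero, hx, Nat.pow_dvd_pow_iff_le_right hp]
    omega
  have hdigit : (((ε i).toNat : ℤ) - (ε' i).toNat) • (p ^ i • x) = 0 := by
    rw [← natCast_zsmul, Nat.cast_pow, ← mul_smul, ← digitSum_succ_sub_digitSum_succ p ih,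
      sub_smul, ← digitSMulHom_apply hA ε hkill, ← digitSMulHom_apply hA ε' hkill, h, sub_self]
  cases hε : ε i <;> cases hε' : ε' i <;> simp [hε, hε'] at hdigit ⊢ <;> exact hne hdigit

end PrimaryGroup

section Graph

variable {A₁ A₂ : Type*} [AddCommGroup A₁] [AddCommGroup A₂]

lemma AddMonoidHom.graph_eq_ker (α : A₁ →+ A₂) :
    α.graph = (snd A₁ A₂ - α.comp (fst A₁ A₂)).ker := by
  ext x
  simp only [mem_graph, mem_ker, sub_apply, coe_snd, comp_apply, coe_fst, sub_eq_zero]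
  exact eq_comm

noncomputable def AddMonoidHom.quotientGraphEquiv (α : A₁ →+ A₂) :
    (A₁ × A₂) ⧸ α.graph ≃+ A₂ :=
  (QuotientAddGroup.quotientAddEquivOfEq α.graph_eq_ker).trans
    (QuotientAddGroup.quotientKerEquivOfSurjective _ fun b => ⟨(0, b), by simp⟩)

lemma AddMonoidHom.graph_injective :
    Injective (graph : (A₁ →+ A₂) → AddSubgroup (A₁ × A₂)) := by
  intro α β h
  ext a
  have ha : (a, α a) ∈ β.graph := h ▸ mem_graph.mpr rfl
  exact (mem_graph.mp ha).symm

end Graph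

lemma mk_addSubgroup_le_continuum (G : Type*) [AddGroup G] [Countable G] :
    #(AddSubgroup G) ≤ 𝔠 :=
  calc #(AddSubgroup G) ≤ #(Set G) := mk_le_of_injective SetLike.coe_injective
    _ = 2 ^ #G := mk_set
    _ ≤ 2 ^ ℵ₀ := power_le_power_left two_ne_zero mk_le_aleph0
    _ = 𝔠 := two_power_aleph0

section Prufer

variable {p : ℕ} {A₁ A₂ : Type*} [AddCommGroup A₁] [AddCommGroup A₂]

lemma pruferSubgroup.exists_pow_smul_eq_zero (x : pruferSubgroup p) : ∃ n : ℕ, p ^ n • x = 0 := by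
  obtain ⟨n, hn⟩ := x.2
  exact ⟨n, Subtype.ext (by simpa [← natCast_zsmul] using hn)⟩

lemma pruferSubgroup.exists_addOrderOf_eq_pow (hp : 0 < p) (n : ℕ) :
    ∃ x : pruferSubgroup p, addOrderOf x = p ^ n := by
  obtain ⟨y, hy⟩ : ∃ y : QModZ, addOrderOf y = p ^ n :=
    ⟨_, AddCircle.addOrderOf_period_div (p := (1 : ℚ)) (pow_pos hp n)⟩
  refine ⟨⟨y, n, ?_⟩, by rw [← AddSubgroup.addOrderOf_coe]; exact hy⟩
  rw [← Nat.cast_pow, natCast_zsmul, ← hy]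
  exact addOrderOf_nsmul_eq_zero _

lemma IsPrufer.countable (h : IsPrufer p A₁) : Countable A₁ := by
  obtain ⟨e⟩ := h
  have : Countable QModZ := QuotientAddGroup.mk_surjective.countable
  exact e.injective.countable

lemma IsPrufer.quotient_graph (h₂ : IsPrufer p A₂) (α : A₁ →+ A₂) :
    IsPrufer p ((A₁ × A₂) ⧸ α.graph) :=
  h₂.map α.quotientGraphEquiv.trans

lemma IsPrufer.continuum_le_mk_addMonoidHom (hp : 1 < p) (h₁ : IsPrufer p A₁)
    (h₂ : IsPrufer p A₂) : 𝔠 ≤ #(A₁ →+ A₂) := by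
  obtain ⟨e₁⟩ := h₁
  obtain ⟨e₂⟩ := h₂
  let E := (AddEquiv.addMonoidHomCongrLeftEquiv e₁.symm).trans
    (AddEquiv.addMonoidHomCongrRightEquiv e₂.symm)
  have hinj := E.injective.comp (digitSMulHom_injective hp
    pruferSubgroup.exists_pow_smul_eq_zero (pruferSubgroup.exists_addOrderOf_eq_pow hp.pos))
  simpa [← two_power_aleph0, mk_arrow] using lift_mk_le'.mpr ⟨⟨_, hinj⟩⟩

end Prufer

/-- If `A = A₁ ⊕ A₂` with `A₁, A₂` Prüfer `p`-groups, then the set of subgroups `B` of `A`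
with `A/B` a Prüfer `p`-group has cardinality continuum. -/
theorem stmt_2 (p : ℕ) (hp : p.Prime) (A₁ A₂ : Type*) [AddCommGroup A₁] [AddCommGroup A₂]
    (h₁ : IsPrufer p A₁) (h₂ : IsPrufer p A₂) :
    Cardinal.mk {B : AddSubgroup (A₁ × A₂) // IsPrufer p ((A₁ × A₂) ⧸ B)} =
      Cardinal.continuum := by
  have := h₁.countable
  have := h₂.countable
  refine le_antisymm ((mk_subtype_le _).trans (mk_addSubgroup_le_continuum _)) ?_
  calc 𝔠 ≤ #(A₁ →+ A₂) := h₁.continuum_le_mk_addMonoidHom hp.one_lt h₂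
    _ ≤ _ := mk_le_of_injective (f := fun α => ⟨α.graph, h₂.quotient_graph α⟩)
      fun _ _ h => AddMonoidHom.graph_injective (congrArg Subtype.val h)
end

section
/- Let $G$ be a group, $k$ a field, and $M$ a simple $kG$-module with $C_G(M) = 1$. If $A$ is a nontrivial finite abelian normal $p$-subgroup of $G$, then $p \neq \mathrm{char}\, k$. -/
/-!
In characteristic `p` every element `a` of the `p`-group `A` acts unipotently: `ρ a - 1` is
nilpotent because `(ρ a - 1) ^ p ^ n = ρ (a ^ p ^ n) - 1`. Commuting nilpotent endomorphisms of a
nonzero module have a common nonzero kernel vector, so the `A`-invariants of `M` are nonzero. Since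
`A` is normal they form a `G`-submodule, hence all of `M` by simplicity; then `A` acts trivially
and faithfulness forces `A = 1`.
-/

theorem isNilpotent_sub_one_of_pow_expChar_pow_eq_one {R : Type*} [Ring R] {p : ℕ} [ExpChar R p]
    {x : R} {n : ℕ} (hx : x ^ p ^ n = 1) : IsNilpotent (x - 1) :=
  ⟨p ^ n, by rw [sub_pow_expChar_pow_of_commute p n (Commute.one_right x), hx, one_pow, sub_self]⟩

namespace Module.End

variable {R M : Type*} [Semiring R] [AddCommMonoid M] [Module R M]

theorem exists_pow_apply_ne_zero_and_apply_eq_zero {f : Module.End R M} (hf : IsNilpotent f)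
    {m : M} (hm : m ≠ 0) : ∃ n, (f ^ n) m ≠ 0 ∧ f ((f ^ n) m) = 0 := by
  classical
  have hkill : ∃ n, (f ^ n) m = 0 := hf.imp fun n hn ↦ by rw [hn]; rfl
  have hpos : 0 < Nat.find hkill :=
    Nat.pos_of_ne_zero fun h ↦ hm (by simpa [h] using Nat.find_spec hkill)
  refine ⟨Nat.find hkill - 1, Nat.find_min hkill (Nat.sub_lt hpos one_pos), ?_⟩
  rw [← mul_apply, ← pow_succ', Nat.sub_one_add_one hpos.ne']
  exact Nat.find_spec hkill

theorem exists_ne_zero_forall_apply_eq_zero_of_isNilpotent [Nontrivial M] {ι : Type*} [Finite ι]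
    (f : ι → Module.End R M) (hnil : ∀ i, IsNilpotent (f i))
    (hcomm : ∀ i j, Commute (f i) (f j)) : ∃ m ≠ 0, ∀ i, f i m = 0 := by
  classical
  have := Fintype.ofFinite ι
  suffices ∀ s : Finset ι, ∃ m ≠ 0, ∀ i ∈ s, f i m = 0 by
    simpa using this Finset.univ
  intro s
  induction s using Finset.induction_on with
  | empty => simpa using exists_ne (0 : M)
  | insert i s _ ih =>
    obtain ⟨m, hm, hms⟩ := ih
    obtain ⟨n, hn, hfi⟩ := exists_pow_apply_ne_zero_and_apply_eq_zero (hnil i) hm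
    refine ⟨(f i ^ n) m, hn, (Finset.forall_mem_insert _ _ _).mpr ⟨hfi, fun j hj ↦ ?_⟩⟩
    rw [← mul_apply, ((hcomm i j).pow_left n).symm.eq, mul_apply, hms j hj, map_zero]

end Module.End

/-- If a simple faithful `kG`-module exists and `A` is a nontrivial finite abelian normal
`p`-subgroup of `G`, then `p ≠ char k`. -/
theorem stmt_8 {k G M : Type*} [Field k] [Group G] [AddCommGroup M] [Module k M]
    (ρ : Representation k G M) (hnt : Nontrivial M)
    (hsimple : ∀ W : Submodule k M, (∀ g : G, ∀ m ∈ W, ρ g m ∈ W) → W = ⊥ ∨ W = ⊤)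
    (hfaith : ∀ g : G, (∀ m : M, ρ g m = m) → g = 1)
    (p : ℕ) (hp : p.Prime) (A : Subgroup G) (hAn : A.Normal) (hAne : A ≠ ⊥)
    (hAfin : Finite A) (hAcomm : ∀ a ∈ A, ∀ b ∈ A, a * b = b * a)
    (hApgrp : ∀ a ∈ A, ∃ m : ℕ, a ^ p ^ m = 1) :
    ringChar k ≠ p := by
  intro hchar
  have : Fact p.Prime := ⟨hp⟩
  have : CharP k p := hchar ▸ ringChar.charP k
  have : CharP (Module.End k M) p := charP_of_injective_algebraMap' k p
  have hunip : ∀ a : A, IsNilpotent (ρ a - 1) := fun a ↦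
    (hApgrp a a.2).elim fun n hn ↦
      isNilpotent_sub_one_of_pow_expChar_pow_eq_one (by rw [← map_pow, hn, map_one])
  have hcomm : ∀ a b : A, Commute (ρ a - 1) (ρ b - 1) := fun a b ↦
    have hab : Commute (ρ a) (ρ b) := by
      rw [Commute, SemiconjBy, ← map_mul, ← map_mul, hAcomm a a.2 b b.2]
    (hab.sub_left (.one_left _)).sub_right (.one_right _)
  let W := Representation.invariants (ρ.comp A.subtype)
  have hW : W ≠ ⊥ := by
    obtain ⟨m, hm, hfix⟩ :=
      Module.End.exists_ne_zero_forall_apply_eq_zero_of_isNilpotent _ hunip hcomm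
    exact fun h ↦ hm ((Submodule.eq_bot_iff W).mp h m fun a ↦ sub_eq_zero.mp (hfix a))
  have hWtop : W = ⊤ := (hsimple W fun g m hm ↦ ρ.le_comap_invariants A g hm).resolve_left hW
  refine hAne ((Subgroup.eq_bot_iff_forall A).mpr fun a ha ↦ hfaith a fun m ↦ ?_)
  exact (hWtop ▸ Submodule.mem_top : m ∈ W) ⟨a, ha⟩
end

section
/- Let $G$ be a group, $k$ a field, $M$ a simple $kG$-module, and $H \le G$ a subgroup of finite index. Then $M$ contains a simple $kH$-submodule. -/
/-!
Let `K` be the normal core of `H`; it has finite index, so `M` is finitely generated over `k[K]`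
and has a maximal `K`-stable subspace `V`. Normality of `K` lets `G` permute the `K`-stable
subspaces, and the translates `ρ g V` are finitely many maximal ones whose intersection is
`G`-stable, hence zero. Thus `M` embeds into a finite product of simple `k[K]`-modules and is
artinian over `k[K]`; a fortiori the `H`-stable subspaces satisfy the descending chain condition,
and a minimal nonzero one is the simple `k[H]`-submodule.
-/

section

variable {R M : Type*} [Ring R] [AddCommGroup M] [Module R M]

theorem isArtinian_of_sInf_coatoms_eq_bot {s : Set (Submodule R M)} (hs : s.Finite)
    (hcoatom : ∀ N ∈ s, IsCoatom N) (hbot : sInf s = ⊥) : IsArtinian R M := by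
  have := hs.to_subtype
  have (N : s) : IsSimpleModule R (M ⧸ N.1) := isSimpleModule_iff_isCoatom.mpr (hcoatom N N.2)
  refine isArtinian_of_injective (LinearMap.pi fun N : s ↦ N.1.mkQ) ?_
  rw [← LinearMap.ker_eq_bot, LinearMap.ker_pi, eq_bot_iff, ← hbot]
  simp [sInf_eq_iInf']

end

open scoped MonoidAlgebra

namespace Representation

variable {k G M : Type*} [Field k] [Group G] [AddCommGroup M] [Module k M]
  {ρ : Representation k G M}

variable (ρ) in
theorem map_map_rho (g h : G) (p : Submodule k M) :
    (p.map (ρ h)).map (ρ g) = p.map (ρ (g * h)) := by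
  rw [← Submodule.map_comp, map_mul, Module.End.mul_eq_comp]

variable (ρ) in
theorem map_rho_one (p : Submodule k M) : p.map (ρ 1) = p := by
  rw [map_one, Module.End.one_eq_id, Submodule.map_id]

instance _root_.Subrepresentation.instNontrivial [Nontrivial M] :
    Nontrivial (Subrepresentation ρ) :=
  ⟨⊥, ⊤, fun h ↦ bot_ne_top (congrArg Subrepresentation.toSubmodule h)⟩

theorem _root_.Subrepresentation.map_toSubmodule_eq (σ : Subrepresentation ρ) (g : G) :
    σ.toSubmodule.map (ρ g) = σ.toSubmodule := by
  refine le_antisymm (Submodule.map_le_iff_le_comap.mpr fun v hv ↦ σ.apply_mem_toSubmodule g hv)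
    fun v hv ↦ ⟨ρ g⁻¹ v, σ.apply_mem_toSubmodule g⁻¹ hv, ρ.self_inv_apply g v⟩

theorem IsIrreducible.nontrivial [ρ.IsIrreducible] : Nontrivial M := by
  by_contra h
  rw [not_nontrivial_iff_subsingleton] at h
  exact bot_ne_top (α := Subrepresentation ρ) (Subrepresentation.ext (Subsingleton.elim _ _))

theorem IsIrreducible.eq_bot_or_eq_top [ρ.IsIrreducible] {p : Submodule k M}
    (hp : ∀ g, ∀ v ∈ p, ρ g v ∈ p) : p = ⊥ ∨ p = ⊤ :=
  (IsSimpleOrder.eq_bot_or_eq_top (⟨p, hp⟩ : Subrepresentation ρ)).imp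
    (congrArg Subrepresentation.toSubmodule) (congrArg Subrepresentation.toSubmodule)

theorem IsIrreducible.span_orbit_eq_top [ρ.IsIrreducible] {v : M} (hv : v ≠ 0) :
    Submodule.span k (Set.range fun g ↦ ρ g v) = ⊤ := by
  refine (IsIrreducible.eq_bot_or_eq_top (ρ := ρ) fun g w hw ↦ ?_).resolve_left fun h ↦ hv ?_
  · have : ρ g w ∈ (Submodule.span k _).map (ρ g) := Submodule.mem_map_of_mem hw
    rw [Submodule.map_span] at this
    refine Submodule.span_mono ?_ this
    rintro _ ⟨_, ⟨h, rfl⟩, rfl⟩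
    exact ⟨g * h, by simp⟩
  · simpa [h] using Submodule.subset_span (R := k) ⟨1, rfl⟩ (s := Set.range fun g ↦ ρ g v)

theorem IsIrreducible.iInf_map_eq_bot [ρ.IsIrreducible] {p : Submodule k M} (hp : p ≠ ⊤) :
    ⨅ g, p.map (ρ g) = ⊥ := by
  refine (IsIrreducible.eq_bot_or_eq_top (ρ := ρ) fun h v hv ↦ ?_).resolve_right fun htop ↦ hp ?_
  · rw [Submodule.mem_iInf] at hv ⊢
    intro g
    have := Submodule.mem_map_of_mem (f := ρ h) (hv (h⁻¹ * g))
    rwa [map_map_rho, mul_inv_cancel_left] at this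
  · rw [eq_top_iff, ← htop]
    exact (iInf_le _ 1).trans_eq (map_rho_one ρ p)

theorem IsIrreducible.module_finite_comp_subtype [ρ.IsIrreducible] (L : Subgroup G)
    [L.FiniteIndex] : Module.Finite k[L] (Representation.asModule (ρ.comp L.subtype)) := by
  have := IsIrreducible.nontrivial (ρ := ρ)
  obtain ⟨v, hv⟩ := exists_ne (0 : M)
  let N := Submodule.span k[L]
    (Set.range fun c : G ⧸ L ↦ ρ c.out⁻¹ v : Set (Representation.asModule (ρ.comp L.subtype)))
  suffices h : N = ⊤ from ⟨h ▸ Submodule.fg_span (Set.finite_range _)⟩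
  -- `g = l * (g⁻¹ L).out⁻¹` with `l ∈ L`, so `ρ g v` is an `L`-translate of a generator
  have horbit : Set.range (fun g ↦ ρ g v) ⊆ (Subrepresentation.ofSubmodule' N).toSubmodule := by
    rintro _ ⟨g, rfl⟩
    obtain ⟨l, hl⟩ := QuotientGroup.mk_out_eq_mul L g⁻¹
    have := (Subrepresentation.ofSubmodule' N).apply_mem_toSubmodule l
      (show ρ (QuotientGroup.mk (s := L) g⁻¹).out⁻¹ v ∈ N from Submodule.subset_span ⟨_, rfl⟩)
    simpa [hl] using this
  rw [eq_top_iff]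
  intro w _
  have : w ∈ Submodule.span k (Set.range fun g ↦ ρ g v) := by
    rw [IsIrreducible.span_orbit_eq_top hv]; trivial
  exact Submodule.span_le.mpr horbit this

section Normal

variable {K : Subgroup G} [K.Normal]

variable (ρ) in
def translateSubrepresentation (g : G) (σ : Subrepresentation (ρ.comp K.subtype)) :
    Subrepresentation (ρ.comp K.subtype) where
  toSubmodule := σ.toSubmodule.map (ρ g)
  apply_mem_toSubmodule := by
    rintro l _ ⟨v, hv, rfl⟩
    refine ⟨ρ (g⁻¹ * l * g) v, σ.apply_mem_toSubmodule ⟨_, ‹K.Normal›.conj_mem' l l.2 g⟩ hv, ?_⟩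
    simp [← Module.End.mul_apply, ← map_mul, mul_assoc]

variable (ρ) in
def translateSubrepresentationOrderIso (g : G) :
    Subrepresentation (ρ.comp K.subtype) ≃o Subrepresentation (ρ.comp K.subtype) where
  toFun := translateSubrepresentation ρ g
  invFun := translateSubrepresentation ρ g⁻¹
  left_inv σ := Subrepresentation.ext <| by
    simp only [translateSubrepresentation, map_map_rho, inv_mul_cancel, map_rho_one]
  right_inv σ := Subrepresentation.ext <| by
    simp only [translateSubrepresentation, map_map_rho, mul_inv_cancel, map_rho_one]
  map_rel_iff' {σ τ} := by
    change σ.toSubmodule.map (ρ g) ≤ τ.toSubmodule.map (ρ g) ↔ σ.toSubmodule ≤ τ.toSubmodule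
    exact Submodule.map_le_map_iff_of_injective (ρ.apply_bijective g).injective _ _

theorem finite_range_translateSubrepresentationOrderIso [K.FiniteIndex]
    (σ : Subrepresentation (ρ.comp K.subtype)) :
    (Set.range fun g ↦ translateSubrepresentationOrderIso ρ g σ).Finite := by
  refine (Set.finite_range fun c : G ⧸ K ↦ translateSubrepresentationOrderIso ρ c.out σ).subset ?_
  rintro _ ⟨g, rfl⟩
  obtain ⟨l, hl⟩ := QuotientGroup.mk_out_eq_mul K g
  refine ⟨g, Subrepresentation.ext ?_⟩
  change σ.toSubmodule.map (ρ (QuotientGroup.mk g : G ⧸ K).out) = σ.toSubmodule.map (ρ g)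
  rw [hl, ← map_map_rho]
  exact congrArg _ (σ.map_toSubmodule_eq l)

variable (K) in
theorem IsIrreducible.wellFoundedLT_subrepresentation_comp_subtype [ρ.IsIrreducible]
    [K.FiniteIndex] : WellFoundedLT (Subrepresentation (ρ.comp K.subtype)) := by
  have := IsIrreducible.nontrivial (ρ := ρ)
  have := IsIrreducible.module_finite_comp_subtype (ρ := ρ) K
  let e := Subrepresentation.subrepresentationSubmoduleOrderIso (ρ := ρ.comp K.subtype)
  have : IsCoatomic (Subrepresentation (ρ.comp K.subtype)) := e.isCoatomic_iff.mpr inferInstance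
  obtain ⟨V, hV⟩ := IsCoatomic.exists_coatom (α := Subrepresentation (ρ.comp K.subtype))
  let N (g : G) := e (translateSubrepresentationOrderIso ρ g V)
  have : IsArtinian k[K] (Representation.asModule (ρ.comp K.subtype)) := by
    refine isArtinian_of_sInf_coatoms_eq_bot (s := Set.range N) ?_ ?_ ?_
    · refine ((finite_range_translateSubrepresentationOrderIso V).image e).subset ?_
      rintro _ ⟨g, rfl⟩
      exact ⟨_, ⟨g, rfl⟩, rfl⟩
    · rintro _ ⟨g, rfl⟩
      exact (e.isCoatom_iff _).mpr (((translateSubrepresentationOrderIso ρ g).isCoatom_iff V).mpr hV)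
    · rw [sInf_range, eq_bot_iff]
      intro v hv
      have : (show M from v) ∈ ⨅ g, V.toSubmodule.map (ρ g) :=
        Submodule.mem_iInf _ |>.mpr fun g ↦ Submodule.mem_iInf _ |>.mp hv g
      rw [IsIrreducible.iInf_map_eq_bot fun h ↦ hV.1 (Subrepresentation.ext h)] at this
      exact (Submodule.mem_bot _).mpr ((Submodule.mem_bot k).mp this)
  exact e.strictMono.wellFoundedLT

end Normal

theorem wellFoundedLT_subrepresentation_comp_subtype_of_le {K H : Subgroup G} (hKH : K ≤ H)
    [WellFoundedLT (Subrepresentation (ρ.comp K.subtype))] :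
    WellFoundedLT (Subrepresentation (ρ.comp H.subtype)) :=
  StrictMono.wellFoundedLT (f := fun σ ↦ (⟨σ.toSubmodule, fun l _ hv ↦
    σ.apply_mem_toSubmodule ⟨l, hKH l.2⟩ hv⟩ : Subrepresentation (ρ.comp K.subtype)))
    fun _ _ h ↦ h

end Representation

open Representation in
/-- A simple `kG`-module contains a simple `kH`-submodule for every finite index subgroup
`H ≤ G`. -/
theorem stmt_9 {k G M : Type*} [Field k] [Group G] [AddCommGroup M] [Module k M]
    (ρ : Representation k G M) (hnt : Nontrivial M)
    (hsimple : ∀ W : Submodule k M, (∀ g : G, ∀ m ∈ W, ρ g m ∈ W) → W = ⊥ ∨ W = ⊤)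
    (H : Subgroup G) (hH : H.FiniteIndex) :
    ∃ W : Submodule k M, W ≠ ⊥ ∧ (∀ h ∈ H, ∀ m ∈ W, ρ h m ∈ W) ∧
      ∀ U : Submodule k M, U ≤ W → (∀ h ∈ H, ∀ m ∈ U, ρ h m ∈ U) →
        U = ⊥ ∨ U = W := by
  have : ρ.IsIrreducible :=
    { eq_bot_or_eq_top σ := (hsimple σ.toSubmodule fun g _ hm ↦ σ.apply_mem_toSubmodule g hm).imp
        Subrepresentation.ext Subrepresentation.ext }
  have := IsIrreducible.wellFoundedLT_subrepresentation_comp_subtype (ρ := ρ) H.normalCore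
  have := wellFoundedLT_subrepresentation_comp_subtype_of_le (ρ := ρ) H.normalCore_le
  obtain ⟨W, hW⟩ := IsAtomic.exists_atom (Subrepresentation (ρ.comp H.subtype))
  refine ⟨W.toSubmodule, fun h ↦ hW.1 (Subrepresentation.ext h),
    fun h hh _ hm ↦ W.apply_mem_toSubmodule ⟨h, hh⟩ hm, fun U hUW hU ↦ ?_⟩
  exact (hW.le_iff.mp (show ⟨U, fun h _ hm ↦ hU h h.2 _ hm⟩ ≤ W from hUW)).imp
    (congrArg Subrepresentation.toSubmodule) (congrArg Subrepresentation.toSubmodule)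
end

section
/- Let $k$ be a field, $H = H_1 \times H_2$ a direct product of two groups, and let $M_1, M_2$ be simple $k H_1$- and $k H_2$-modules respectively. Regard $M = M_1 \otimes_k M_2$ as a $kH$-module via $(m_1 \otimes m_2)(h_1, h_2) = m_1 h_1 \otimes m_2 h_2$. Then $M$ has a simple quotient $W$ such that $C_{H_1}(W) = C_{H_1}(M_1)$ and $C_{H_2}(W) = C_{H_2}(M_2)$. -/
open TensorProduct

/-- A nonzero simple tensor in a tensor product of vector spaces is nonzero. -/
lemma aux_tmul_ne_zero {k M₁ M₂ : Type*} [Field k]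
    [AddCommGroup M₁] [Module k M₁] [AddCommGroup M₂] [Module k M₂]
    {a₁ : M₁} {a₂ : M₂} (h₁ : a₁ ≠ 0) (h₂ : a₂ ≠ 0) :
    (a₁ ⊗ₜ[k] a₂ : TensorProduct k M₁ M₂) ≠ 0 := by
  obtain ⟨φ, hφ⟩ : ∃ φ : Module.Dual k M₁, φ a₁ ≠ 0 := by
    by_contra hc
    push_neg at hc
    exact h₁ ((Module.forall_dual_apply_eq_zero_iff k a₁).mp hc)
  obtain ⟨ψ, hψ⟩ : ∃ ψ : Module.Dual k M₂, ψ a₂ ≠ 0 := by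
    by_contra hc
    push_neg at hc
    exact h₂ ((Module.forall_dual_apply_eq_zero_iff k a₂).mp hc)
  intro h
  have : (TensorProduct.lid k k) (TensorProduct.map φ ψ (a₁ ⊗ₜ[k] a₂)) = φ a₁ * ψ a₂ := by
    simp [TensorProduct.map_tmul, smul_eq_mul]
  rw [h] at this
  simp only [map_zero] at this
  exact mul_ne_zero hφ hψ this.symm

/-- The tensor product of simple modules over the factors of a direct product has a simple
quotient with the prescribed kernels on each factor. -/
theorem stmt_11 {k H₁ H₂ M₁ M₂ : Type*} [Field k] [Group H₁] [Group H₂]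
    [AddCommGroup M₁] [Module k M₁] [AddCommGroup M₂] [Module k M₂]
    (ρ₁ : Representation k H₁ M₁) (ρ₂ : Representation k H₂ M₂)
    (hnt₁ : Nontrivial M₁)
    (hsimple₁ : ∀ W : Submodule k M₁, (∀ g : H₁, ∀ m ∈ W, ρ₁ g m ∈ W) → W = ⊥ ∨ W = ⊤)
    (hnt₂ : Nontrivial M₂)
    (hsimple₂ : ∀ W : Submodule k M₂, (∀ g : H₂, ∀ m ∈ W, ρ₂ g m ∈ W) → W = ⊥ ∨ W = ⊤) :
    let ρ : Representation k (H₁ × H₂) (TensorProduct k M₁ M₂) :=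
      Representation.tprod
        (ρ₁.comp (MonoidHom.fst H₁ H₂) : Representation k (H₁ × H₂) M₁)
        (ρ₂.comp (MonoidHom.snd H₁ H₂) : Representation k (H₁ × H₂) M₂)
    ∃ L : Submodule k (TensorProduct k M₁ M₂), L ≠ ⊤ ∧
      (∀ g : H₁ × H₂, ∀ m ∈ L, ρ g m ∈ L) ∧
      (∀ U : Submodule k (TensorProduct k M₁ M₂), L ≤ U →
        (∀ g : H₁ × H₂, ∀ m ∈ U, ρ g m ∈ U) → U = L ∨ U = ⊤) ∧
      (∀ h₁ : H₁, (∀ m : TensorProduct k M₁ M₂, ρ (h₁, 1) m - m ∈ L) ↔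
        ∀ x : M₁, ρ₁ h₁ x = x) ∧
      (∀ h₂ : H₂, (∀ m : TensorProduct k M₁ M₂, ρ (1, h₂) m - m ∈ L) ↔
        ∀ x : M₂, ρ₂ h₂ x = x) := by
  intro ρ
  obtain ⟨a₁, ha₁⟩ := exists_ne (0 : M₁)
  obtain ⟨a₂, ha₂⟩ := exists_ne (0 : M₂)
  set v : TensorProduct k M₁ M₂ := a₁ ⊗ₜ[k] a₂ with hv
  have hvne : v ≠ 0 := aux_tmul_ne_zero ha₁ ha₂
  have hρ : ∀ (g : H₁ × H₂) (x : M₁) (y : M₂), ρ g (x ⊗ₜ[k] y) = ρ₁ g.1 x ⊗ₜ[k] ρ₂ g.2 y := by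
    intro g x y
    simp [ρ, Representation.tprod_apply]
  -- spans of orbits are everything
  have hW₁ : Submodule.span k (Set.range fun g : H₁ => ρ₁ g a₁) = ⊤ := by
    have hinv : ∀ g : H₁, ∀ m ∈ Submodule.span k (Set.range fun g : H₁ => ρ₁ g a₁),
        ρ₁ g m ∈ Submodule.span k (Set.range fun g : H₁ => ρ₁ g a₁) := by
      intro g m hm
      have hle : Submodule.map (ρ₁ g) (Submodule.span k (Set.range fun h : H₁ => ρ₁ h a₁)) ≤
          Submodule.span k (Set.range fun h : H₁ => ρ₁ h a₁) := by
        rw [Submodule.map_span]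
        apply Submodule.span_le.2
        rintro _ ⟨_, ⟨h, rfl⟩, rfl⟩
        exact Submodule.subset_span ⟨g * h, by simp [map_mul, Module.End.mul_apply]⟩
      exact hle ⟨m, hm, rfl⟩
    rcases hsimple₁ _ hinv with h | h
    · exfalso
      have : a₁ ∈ Submodule.span k (Set.range fun g : H₁ => ρ₁ g a₁) :=
        Submodule.subset_span ⟨1, by simp⟩
      rw [h] at this
      exact ha₁ (by simpa using this)
    · exact h
  have hW₂ : Submodule.span k (Set.range fun g : H₂ => ρ₂ g a₂) = ⊤ := by
    have hinv : ∀ g : H₂, ∀ m ∈ Submodule.span k (Set.range fun g : H₂ => ρ₂ g a₂),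
        ρ₂ g m ∈ Submodule.span k (Set.range fun g : H₂ => ρ₂ g a₂) := by
      intro g m hm
      have hle : Submodule.map (ρ₂ g) (Submodule.span k (Set.range fun h : H₂ => ρ₂ h a₂)) ≤
          Submodule.span k (Set.range fun h : H₂ => ρ₂ h a₂) := by
        rw [Submodule.map_span]
        apply Submodule.span_le.2
        rintro _ ⟨_, ⟨h, rfl⟩, rfl⟩
        exact Submodule.subset_span ⟨g * h, by simp [map_mul, Module.End.mul_apply]⟩
      exact hle ⟨m, hm, rfl⟩
    rcases hsimple₂ _ hinv with h | h
    · exfalso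
      have : a₂ ∈ Submodule.span k (Set.range fun g : H₂ => ρ₂ g a₂) :=
        Submodule.subset_span ⟨1, by simp⟩
      rw [h] at this
      exact ha₂ (by simpa using this)
    · exact h
  -- cyclicity: any invariant submodule containing v is everything
  have hcyc : ∀ U : Submodule k (TensorProduct k M₁ M₂),
      (∀ g : H₁ × H₂, ∀ m ∈ U, ρ g m ∈ U) → v ∈ U → U = ⊤ := by
    intro U hU hvU
    have step1 : ∀ (g : H₁) (h : H₂), (ρ₁ g a₁) ⊗ₜ[k] (ρ₂ h a₂) ∈ U := by
      intro g h
      have := hU (g, h) v hvU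
      rwa [hv, hρ] at this
    have step2 : ∀ (x : M₁) (h : H₂), x ⊗ₜ[k] (ρ₂ h a₂) ∈ U := by
      intro x h
      have hle : Submodule.span k (Set.range fun g : H₁ => ρ₁ g a₁) ≤
          U.comap ((TensorProduct.mk k M₁ M₂).flip (ρ₂ h a₂)) := by
        rw [Submodule.span_le]
        rintro _ ⟨g, rfl⟩
        exact step1 g h
      exact hle (hW₁ ▸ Submodule.mem_top)
    have step3 : ∀ (x : M₁) (y : M₂), x ⊗ₜ[k] y ∈ U := by
      intro x y
      have hle : Submodule.span k (Set.range fun h : H₂ => ρ₂ h a₂) ≤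
          U.comap (TensorProduct.mk k M₁ M₂ x) := by
        rw [Submodule.span_le]
        rintro _ ⟨h, rfl⟩
        exact step2 x h
      exact hle (hW₂ ▸ Submodule.mem_top)
    rw [eq_top_iff, ← TensorProduct.span_tmul_eq_top k M₁ M₂, Submodule.span_le]
    rintro _ ⟨x, y, rfl⟩
    exact step3 x y
  -- Zorn's lemma
  set S : Set (Submodule k (TensorProduct k M₁ M₂)) :=
    {L | (∀ g : H₁ × H₂, ∀ m ∈ L, ρ g m ∈ L) ∧ v ∉ L} with hS
  have hchainub : ∀ c ⊆ S, IsChain (· ≤ ·) c → ∀ y ∈ c, ∃ ub ∈ S, ∀ z ∈ c, z ≤ ub := by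
    intro c hcS hchain y hy
    refine ⟨sSup c, ⟨?_, ?_⟩, fun z hz => le_sSup hz⟩
    · intro g m hm
      rw [Submodule.mem_sSup_of_directed ⟨y, hy⟩ hchain.directedOn] at hm ⊢
      obtain ⟨p, hpc, hmp⟩ := hm
      exact ⟨p, hpc, (hcS hpc).1 g m hmp⟩
    · intro hvmem
      rw [Submodule.mem_sSup_of_directed ⟨y, hy⟩ hchain.directedOn] at hvmem
      obtain ⟨p, hpc, hvp⟩ := hvmem
      exact (hcS hpc).2 hvp
  have hbot : (⊥ : Submodule k (TensorProduct k M₁ M₂)) ∈ S :=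
    ⟨fun g m hm => by rw [Submodule.mem_bot] at hm ⊢; rw [hm, map_zero],
      fun h => hvne (Submodule.mem_bot k |>.1 h)⟩
  obtain ⟨L, -, hLS, hLmax⟩ := zorn_le_nonempty₀ S hchainub ⊥ hbot
  · obtain ⟨hLinv, hvL⟩ := hLS
    -- kernels on each factor
    have hN₁ : L.comap ((TensorProduct.mk k M₁ M₂).flip a₂) = ⊥ := by
      have hinv : ∀ g : H₁, ∀ x ∈ L.comap ((TensorProduct.mk k M₁ M₂).flip a₂),
          ρ₁ g x ∈ L.comap ((TensorProduct.mk k M₁ M₂).flip a₂) := by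
        intro g x hx
        have := hLinv (g, 1) (x ⊗ₜ[k] a₂) hx
        rw [hρ] at this
        simpa using this
      rcases hsimple₁ _ hinv with h | h
      · exact h
      · exfalso
        have : a₁ ∈ L.comap ((TensorProduct.mk k M₁ M₂).flip a₂) := h ▸ Submodule.mem_top
        exact hvL this
    have hN₂ : L.comap (TensorProduct.mk k M₁ M₂ a₁) = ⊥ := by
      have hinv : ∀ g : H₂, ∀ y ∈ L.comap (TensorProduct.mk k M₁ M₂ a₁),
          ρ₂ g y ∈ L.comap (TensorProduct.mk k M₁ M₂ a₁) := by
        intro g y hy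
        have := hLinv (1, g) (a₁ ⊗ₜ[k] y) hy
        rw [hρ] at this
        simpa using this
      rcases hsimple₂ _ hinv with h | h
      · exact h
      · exfalso
        have : a₂ ∈ L.comap (TensorProduct.mk k M₁ M₂ a₁) := h ▸ Submodule.mem_top
        exact hvL this
    refine ⟨L, ?_, hLinv, ?_, ?_, ?_⟩
    · intro h
      exact hvL (h ▸ Submodule.mem_top)
    · intro U hLU hUinv
      by_cases hvU : v ∈ U
      · exact Or.inr (hcyc U hUinv hvU)
      · exact Or.inl (le_antisymm (hLmax ⟨hUinv, hvU⟩ hLU) hLU)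
    · intro h₁
      constructor
      · intro hmem x
        have := hmem (x ⊗ₜ[k] a₂)
        rw [hρ] at this
        simp only [map_one, Module.End.one_apply] at this
        have h' : (ρ₁ h₁ x - x) ⊗ₜ[k] a₂ ∈ L := by
          rwa [TensorProduct.sub_tmul]
        have : ρ₁ h₁ x - x ∈ L.comap ((TensorProduct.mk k M₁ M₂).flip a₂) := h'
        rw [hN₁, Submodule.mem_bot, sub_eq_zero] at this
        exact this
      · intro hfix m
        have : ρ (h₁, 1) m = m := by
          induction m using TensorProduct.induction_on with
          | zero => simp
          | tmul x y => rw [hρ]; simp [hfix x]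
          | add p q hp hq => rw [map_add, hp, hq]
        rw [this, sub_self]
        exact L.zero_mem
    · intro h₂
      constructor
      · intro hmem y
        have := hmem (a₁ ⊗ₜ[k] y)
        rw [hρ] at this
        simp only [map_one, Module.End.one_apply] at this
        have h' : a₁ ⊗ₜ[k] (ρ₂ h₂ y - y) ∈ L := by
          rwa [TensorProduct.tmul_sub]
        have : ρ₂ h₂ y - y ∈ L.comap (TensorProduct.mk k M₁ M₂ a₁) := h'
        rw [hN₂, Submodule.mem_bot, sub_eq_zero] at this
        exact this
      · intro hfix m
        have : ρ (1, h₂) m = m := by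
          induction m using TensorProduct.induction_on with
          | zero => simp
          | tmul x y => rw [hρ]; simp [hfix y]
          | add p q hp hq => rw [map_add, hp, hq]
        rw [this, sub_self]
        exact L.zero_mem
end

section
/- Let $k$ be a field that is not locally finite (i.e., $k$ contains either $\mathbb{Q}$ or the rational function field $\mathbb{F}_q(t)$ over a finite field), and let $A$ be a torsion-free abelian group of finite rank. Then $A$ has a faithful irreducible representation over $k$; in fact, $A$ embeds into the multiplicative group of the algebraic closure $\bar{k}$, and any such embedding gives a faithful irreducible representation. -/
/-!
If `k` is not locally finite, its algebraic closure `K` contains infinitely many multiplicatively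
independent elements: the rational primes in characteristic zero, and in characteristic `p` the
elements `t - c`, for `t` transcendental over `𝔽_p` and `c` ranging over the algebraic closure of
`𝔽_p` in `K` (independence comes from unique factorisation in `ℤ`, resp. `F[X]`). Since `Kˣ` is
divisible, the embedding of `ℤⁿ` they define extends to `ℚⁿ`, and it stays injective because
`ℚⁿ / ℤⁿ` is torsion. For any embedding `φ`, the algebra `k[φ(A)]` is a field, as `K / k` is
algebraic, so every nonzero `φ(A)`-stable subspace of it is all of it.
-/

/-- A field is locally finite if every finitely generated subfield is finite. -/
def IsLocallyFiniteField (k : Type*) [Field k] : Prop :=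
  ∀ s : Finset k, Finite (Subfield.closure (s : Set k))

open Polynomial

theorem IsLocallyFiniteField.of_ringHom {k K : Type*} [Field k] [Field K] (f : k →+* K)
    (hK : IsLocallyFiniteField K) : IsLocallyFiniteField k := by
  classical
  intro s
  have : Finite (Subfield.map f (Subfield.closure (s : Set k))) := by
    rw [RingHom.map_field_closure]
    simpa using hK (s.image f)
  exact Finite.of_injective (fun x => (⟨f x, x, x.2, rfl⟩ : Subfield.map f _))
    fun x y h => Subtype.ext (f.injective (congrArg Subtype.val h))

theorem IsLocallyFiniteField.of_isAlgebraic (F k : Type*) [Field F] [Finite F] [Field k]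
    [Algebra F k] [Algebra.IsAlgebraic F k] : IsLocallyFiniteField k := by
  intro s
  let L := IntermediateField.adjoin F (s : Set k)
  have : FiniteDimensional F L := IntermediateField.finiteDimensional_adjoin
    fun x _ => (Algebra.IsAlgebraic.isAlgebraic x).isIntegral
  have : Finite L := Module.finite_of_finite F
  exact Finite.Set.subset (L : Set k)
    (Subfield.closure_le.mpr (IntermediateField.subset_adjoin F _) : _ ≤ L.toSubfield)

theorem exists_transcendental_of_not_isLocallyFiniteField (F : Type*) {k : Type*} [Field F]
    [Finite F] [Field k] [Algebra F k] (hk : ¬IsLocallyFiniteField k) :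
    ∃ t : k, Transcendental F t := by
  by_contra! h
  exact hk (have : Algebra.IsAlgebraic F k := ⟨fun x => not_not.mp (h x)⟩
    IsLocallyFiniteField.of_isAlgebraic F k)

theorem emultiplicity_prod_pow_of_prime {R ι : Type*} [CommMonoidWithZero R] [IsCancelMulZero R]
    {p : ι → R} (hp : ∀ i, Prime (p i)) (hna : Pairwise fun i j => ¬Associated (p i) (p j))
    (s : Finset ι) (e : ι → ℕ) {j : ι} (hj : j ∈ s) :
    emultiplicity (p j) (∏ i ∈ s, p i ^ e i) = e j := by
  classical
  rw [Finset.emultiplicity_prod (hp j), Finset.sum_eq_single_of_mem j hj,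
    emultiplicity_pow_self_of_prime (hp j)]
  intro i _ hij
  rw [emultiplicity_pow (hp j), emultiplicity_eq_zero.mpr, mul_zero]
  exact fun hdvd => hna hij.symm ((hp j).associated_of_dvd (hp i) hdvd)

theorem eq_of_prod_pow_eq_prod_pow_of_prime {R ι : Type*} [CommMonoidWithZero R]
    [IsCancelMulZero R] {p : ι → R} (hp : ∀ i, Prime (p i))
    (hna : Pairwise fun i j => ¬Associated (p i) (p j)) {s : Finset ι} {e e' : ι → ℕ}
    (h : ∏ i ∈ s, p i ^ e i = ∏ i ∈ s, p i ^ e' i) {j : ι} (hj : j ∈ s) :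
    e j = e' j := by
  have := congrArg (emultiplicity (p j)) h
  rwa [emultiplicity_prod_pow_of_prime hp hna s e hj,
    emultiplicity_prod_pow_of_prime hp hna s e' hj, Nat.cast_inj] at this

theorem linearIndependent_ofMul_of_prime {R K ι : Type*} [CommRing R] [IsDomain R] [Field K]
    {ψ : R →+* K} (hψ : Function.Injective ψ) {p : ι → R} (hp : ∀ i, Prime (p i))
    (hna : Pairwise fun i j => ¬Associated (p i) (p j)) {u : ι → Kˣ}
    (hu : ∀ i, (u i : K) = ψ (p i)) : LinearIndependent ℤ (Additive.ofMul ∘ u) := by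
  rw [linearIndependent_iff']
  intro s a hsum j hj
  have hprod : ∏ i ∈ s, u i ^ a i = 1 := by
    simpa [← ofMul_zpow, ← ofMul_prod] using hsum
  have hsplit : ∏ i ∈ s, u i ^ (a i).toNat = ∏ i ∈ s, u i ^ (-a i).toNat := by
    rw [← div_eq_one, ← Finset.prod_div_distrib, ← hprod]
    refine Finset.prod_congr rfl fun i _ => ?_
    rw [← zpow_natCast, ← zpow_natCast, div_eq_mul_inv, ← zpow_sub, Int.toNat_sub_toNat_neg]
  have hR : ∏ i ∈ s, p i ^ (a i).toNat = ∏ i ∈ s, p i ^ (-a i).toNat := by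
    apply hψ
    simpa [hu] using congrArg (Units.val : Kˣ → K) hsplit
  have := eq_of_prod_pow_eq_prod_pow_of_prime hp hna hR hj
  omega

theorem exists_linearIndependent_units_of_charZero (K : Type*) [Field K] [CharZero K] :
    ∃ u : ℕ → Kˣ, LinearIndependent ℤ (Additive.ofMul ∘ u) := by
  have hp (i : ℕ) : Prime (Nat.nth Nat.Prime i : ℤ) :=
    Nat.prime_iff_prime_int.mp (Nat.prime_nth_prime i)
  refine ⟨fun i => Units.mk0 _ (Int.cast_ne_zero.mpr (hp i).ne_zero),
    linearIndependent_ofMul_of_prime (ψ := Int.castRingHom K) Int.cast_injective hp ?_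
      fun i => by simp⟩
  intro i j hij hassoc
  rw [← Int.natAbs_eq_iff_associated, Int.natAbs_natCast, Int.natAbs_natCast] at hassoc
  exact hij (Nat.nth_injective Nat.infinite_setOfPred_prime hassoc)

theorem exists_linearIndependent_units_of_transcendental {F K : Type*} [Field F] [Infinite F]
    [Field K] [Algebra F K] {t : K} (ht : Transcendental F t) :
    ∃ u : ℕ → Kˣ, LinearIndependent ℤ (Additive.ofMul ∘ u) := by
  let c := Infinite.natEmbedding F
  have hne (i : ℕ) : t - algebraMap F K (c i) ≠ 0 := fun h =>
    ht (sub_eq_zero.mp h ▸ isAlgebraic_algebraMap _)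
  refine ⟨fun i => Units.mk0 _ (hne i),
    linearIndependent_ofMul_of_prime (ψ := (aeval t).toRingHom)
      (transcendental_iff_injective.mp ht) (fun i => prime_X_sub_C (c i)) ?_ fun i => by simp⟩
  intro i j hij hassoc
  have := congrArg (eval 0)
    (eq_of_monic_of_associated (monic_X_sub_C (c i)) (monic_X_sub_C (c j)) hassoc)
  exact hij (c.injective (by simpa using this))

theorem exists_linearIndependent_units {K : Type*} [Field K] [IsAlgClosed K]
    (hK : ¬IsLocallyFiniteField K) :
    ∃ u : ℕ → Kˣ, LinearIndependent ℤ (Additive.ofMul ∘ u) := by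
  obtain ⟨p, hchar⟩ := CharP.exists K
  rcases CharP.char_is_prime_or_zero K p with hp | rfl
  · have : Fact p.Prime := ⟨hp⟩
    let : Algebra (ZMod p) K := ZMod.algebra K p
    obtain ⟨t, ht⟩ := exists_transcendental_of_not_isLocallyFiniteField (ZMod p) hK
    have : IsAlgClosed (algebraicClosure (ZMod p) K) := IsAlgClosure.isAlgClosed (ZMod p)
    exact exists_linearIndependent_units_of_transcendental ht.algebraicClosure
  · have : CharZero K := CharP.charP_to_charZero K
    exact exists_linearIndependent_units_of_charZero K

theorem exists_injective_of_linearIndependent {ι M : Type*} [Fintype ι] [AddCommGroup M]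
    [DivisibleBy M ℤ] {v : ι → M} (hv : LinearIndependent ℤ v) :
    ∃ h : (ι → ℚ) →ₗ[ℤ] M, Function.Injective h := by
  let incl : (ι → ℤ) →ₗ[ℤ] (ι → ℚ) := (Int.castAddHom ℚ).toIntLinearMap.compLeft ι
  have hincl : Function.Injective incl := fun x y hxy =>
    funext fun i => Int.cast_injective (congrFun hxy i)
  obtain ⟨h, hh⟩ := (Module.Baer.of_divisible M).extension_property incl hincl
    (Fintype.linearCombination ℤ v)
  refine ⟨h, (injective_iff_map_eq_zero h).mpr fun x hx => ?_⟩
  -- clear denominators: `b • x = incl y` for some `b ≠ 0`, and then `y = 0` by independence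
  obtain ⟨b, hb⟩ := IsLocalization.exist_integer_multiples_of_finite (nonZeroDivisors ℤ) x
  choose y hy using hb
  have hxy : incl y = (b : ℤ) • x := funext hy
  have hy0 : y = 0 := by
    apply linearIndependent_iff_injective_fintypeLinearCombination.mp hv
    rw [← hh, LinearMap.comp_apply, hxy, map_smul, hx, smul_zero, map_zero]
  rw [hy0, map_zero, eq_comm, smul_eq_zero] at hxy
  exact hxy.resolve_left (nonZeroDivisors.coe_ne_zero b)

theorem IsAlgClosed.surjective_pow_units (K : Type*) [Field K] [IsAlgClosed K] {n : ℕ}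
    (hn : n ≠ 0) : Function.Surjective fun u : Kˣ => u ^ n := by
  intro u
  obtain ⟨z, hz⟩ := IsAlgClosed.exists_pow_nat_eq (u : K) (Nat.pos_of_ne_zero hn)
  have hz0 : z ≠ 0 := by
    rintro rfl
    exact u.ne_zero (hz ▸ zero_pow hn)
  exact ⟨Units.mk0 z hz0, Units.ext (by simpa using hz)⟩

theorem exists_injective_monoidHom_units {K A ι : Type*} [Field K] [IsAlgClosed K]
    (hK : ¬IsLocallyFiniteField K) [AddCommGroup A] [Fintype ι] {f : A →+ (ι → ℚ)}
    (hf : Function.Injective f) : ∃ φ : Multiplicative A →* Kˣ, Function.Injective φ := by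
  let : DivisibleBy (Additive Kˣ) ℕ :=
    divisibleByOfSMulRightSurj _ _ fun hn => IsAlgClosed.surjective_pow_units K hn
  let : DivisibleBy (Additive Kˣ) ℤ := AddGroup.divisibleByIntOfDivisibleByNat _
  obtain ⟨u, hu⟩ := exists_linearIndependent_units hK
  obtain ⟨e, he⟩ := Countable.exists_injective_nat ι
  obtain ⟨h, hh⟩ := exists_injective_of_linearIndependent (hu.comp e he)
  exact ⟨AddMonoidHom.toMultiplicativeLeft (h.toAddMonoidHom.comp f),
    Additive.toMul.injective.comp (hh.comp (hf.comp Multiplicative.toAdd.injective))⟩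

theorem Algebra.mul_mem_of_mem_adjoin {k L : Type*} [CommSemiring k] [Semiring L] [Algebra k L]
    {S : Set L} {U : Submodule k L} (hU : ∀ s ∈ S, ∀ x ∈ U, s * x ∈ U) {r : L}
    (hr : r ∈ Algebra.adjoin k S) : ∀ x ∈ U, r * x ∈ U := by
  induction hr using Algebra.adjoin_induction with
  | mem s hs => exact hU s hs
  | algebraMap c =>
    exact fun x hx => by simpa [Algebra.algebraMap_eq_smul_one] using U.smul_mem c hx
  | add r s _ _ hr hs => exact fun x hx => by simpa [add_mul] using U.add_mem (hr x hx) (hs x hx)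
  | mul r s _ _ hr hs => exact fun x hx => by simpa [mul_assoc] using hr _ (hs x hx)

theorem Algebra.eq_bot_or_eq_adjoin_of_mul_mem {k L : Type*} [Field k] [Field L] [Algebra k L]
    [Algebra.IsAlgebraic k L] {S : Set L} {U : Submodule k L}
    (hUS : U ≤ Subalgebra.toSubmodule (Algebra.adjoin k S))
    (hU : ∀ s ∈ S, ∀ x ∈ U, s * x ∈ U) :
    U = ⊥ ∨ U = Subalgebra.toSubmodule (Algebra.adjoin k S) := by
  refine or_iff_not_imp_left.mpr fun hbot => le_antisymm hUS fun w hw => ?_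
  obtain ⟨u, huU, hu0⟩ := Submodule.exists_mem_ne_zero_of_ne_bot hbot
  have hinv : u⁻¹ ∈ Algebra.adjoin k S :=
    (Algebra.adjoin k S).inv_mem_of_algebraic (x := ⟨u, hUS huU⟩)
      (Algebra.IsAlgebraic.isAlgebraic u)
  simpa [mul_assoc, inv_mul_cancel₀ hu0] using
    Algebra.mul_mem_of_mem_adjoin hU (Subalgebra.mul_mem _ hw hinv) u huU

theorem stmt_13_general {k : Type*} [Field k] (hk : ¬ IsLocallyFiniteField k)
    (A : Type*) [AddCommGroup A]
    (n : ℕ) (f : A →+ (Fin n → ℚ)) (hf : Function.Injective f) :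
    (∃ φ : Multiplicative A →* (AlgebraicClosure k)ˣ, Function.Injective φ) ∧
    ∀ φ : Multiplicative A →* (AlgebraicClosure k)ˣ, Function.Injective φ →
      ∃ W : Submodule k (AlgebraicClosure k), W ≠ ⊥ ∧
        (∀ a : Multiplicative A, ∀ x ∈ W, (φ a : AlgebraicClosure k) * x ∈ W) ∧
        (∀ U : Submodule k (AlgebraicClosure k), U ≤ W →
          (∀ a : Multiplicative A, ∀ x ∈ U, (φ a : AlgebraicClosure k) * x ∈ U) →
          U = ⊥ ∨ U = W) ∧
        (∀ a : Multiplicative A,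
          (∀ x ∈ W, (φ a : AlgebraicClosure k) * x = x) → a = 1) := by
  have hK : ¬IsLocallyFiniteField (AlgebraicClosure k) := fun hK =>
    hk (hK.of_ringHom (algebraMap k _))
  refine ⟨exists_injective_monoidHom_units hK hf, fun φ hφ => ?_⟩
  let B := Algebra.adjoin k (Set.range fun a => (φ a : AlgebraicClosure k))
  refine ⟨Subalgebra.toSubmodule B, ?_, fun a x hx => ?_, fun U hUB hU => ?_, fun a ha => ?_⟩
  · exact (Submodule.ne_bot_iff _).mpr ⟨1, B.one_mem, one_ne_zero⟩
  · exact B.mul_mem (Algebra.subset_adjoin ⟨a, rfl⟩) hx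
  · exact Algebra.eq_bot_or_eq_adjoin_of_mul_mem hUB (by rintro _ ⟨a, rfl⟩; exact hU a)
  · exact hφ (Units.ext (by simpa using ha 1 B.one_mem))

/-- A torsion-free abelian group of finite rank has a faithful irreducible representation
over any field `k` that is not locally finite: it embeds in the multiplicative group of the
algebraic closure, and any such embedding gives a faithful irreducible representation. -/
theorem stmt_13 {k : Type*} [Field k] (hk : ¬ IsLocallyFiniteField k)
    (A : Type*) [AddCommGroup A] (htf : NoZeroSMulDivisors ℤ A)
    (n : ℕ) (f : A →+ (Fin n → ℚ)) (hf : Function.Injective f) :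
    (∃ φ : Multiplicative A →* (AlgebraicClosure k)ˣ, Function.Injective φ) ∧
    ∀ φ : Multiplicative A →* (AlgebraicClosure k)ˣ, Function.Injective φ →
      ∃ W : Submodule k (AlgebraicClosure k), W ≠ ⊥ ∧
        (∀ a : Multiplicative A, ∀ x ∈ W, (φ a : AlgebraicClosure k) * x ∈ W) ∧
        (∀ U : Submodule k (AlgebraicClosure k), U ≤ W →
          (∀ a : Multiplicative A, ∀ x ∈ U, (φ a : AlgebraicClosure k) * x ∈ U) →
          U = ⊥ ∨ U = W) ∧
        (∀ a : Multiplicative A,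
          (∀ x ∈ W, (φ a : AlgebraicClosure k) * x = x) → a = 1) :=
  stmt_13_general hk A n f hf
end

section
/- Let $A$ be an elementary abelian normal $p$-subgroup of a group $G$ with $|G : C_G(A)| < \infty$, let $k$ be a field, and let $M$ be a simple faithful $kG$-module. Then $A$ contains a subgroup $H$ such that $A/H$ is cyclic and $H$ contains no nontrivial $G$-invariant subgroup. -/
theorem auxCyclic {R : Type*} [CommRing R] [IsDomain R] {G : Type*} [Group G]
    (u : G →* Rˣ) {p : ℕ} (hp : 0 < p) (hu : ∀ g : G, u g ^ p = 1) :
    ∃ g : G, ∀ a : G, ∃ m : ℤ, u a = u g ^ m := by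
  have h1 : {x : R | x ^ p = 1}.Finite := by
    have hsub : {x : R | x ^ p = 1} ⊆
        {x | (Polynomial.X ^ p - Polynomial.C 1 : Polynomial R).IsRoot x} := by
      intro x hx
      simp [Polynomial.IsRoot, sub_eq_zero, hx]
    exact (Polynomial.finite_setOf_isRoot (by
      intro h
      have h0 : (Polynomial.X ^ p - Polynomial.C (1:R)).natDegree = p :=
        Polynomial.natDegree_X_pow_sub_C
      rw [h, Polynomial.natDegree_zero] at h0
      exact hp.ne' h0.symm)).subset hsub
  have h2 : ((fun x : Rˣ => (x : R)) '' (u.range : Set Rˣ)).Finite := by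
    apply h1.subset
    rintro _ ⟨x, hx, rfl⟩
    obtain ⟨g, rfl⟩ := MonoidHom.mem_range.mp hx
    show ((u g : Rˣ) : R) ^ p = 1
    rw [← Units.val_pow_eq_pow_val, hu g, Units.val_one]
  have h3 : (u.range : Set Rˣ).Finite :=
    h2.of_finite_image (fun x _ y _ h => Units.ext h)
  haveI : Finite ↥u.range := h3.to_subtype
  haveI : IsCyclic ↥u.range := isCyclic_of_subgroup_isDomain
    ((Units.coeHom R).comp u.range.subtype)
    (fun x y h => Subtype.ext (Units.ext h))
  obtain ⟨⟨x, hx⟩, hgen⟩ := IsCyclic.exists_generator (α := ↥u.range)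
  obtain ⟨g, rfl⟩ := MonoidHom.mem_range.mp hx
  refine ⟨g, fun a => ?_⟩
  obtain ⟨m, hm⟩ := Subgroup.mem_zpowers_iff.mp (hgen ⟨u a, ⟨a, rfl⟩⟩)
  refine ⟨m, ?_⟩
  have := congrArg (Subtype.val) hm
  simpa using this.symm

theorem auxDomainCyclic {k : Type*} [Field k] {N : Type*} [AddCommGroup N] [Module k N]
    [Nontrivial N] {A : Type*} [Group A] (u : A →* Module.End k N)
    (hcommS : ∀ a b : A, u a * u b = u b * u a)
    (hinj : ∀ x : Module.End k N, x ∈ Algebra.adjoin k (Set.range ⇑u) → x ≠ 0 →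
      Function.Injective x)
    {p : ℕ} (hp : 0 < p) (hup : ∀ a : A, u a ^ p = 1) :
    ∃ g : A, ∀ a : A, ∃ m : ℤ, u a = u (g ^ m) := by
  have hcomm' : ∀ x ∈ Set.range ⇑u, ∀ y ∈ Set.range ⇑u, x * y = y * x := by
    rintro _ ⟨a, rfl⟩ _ ⟨b, rfl⟩
    exact hcommS a b
  letI : CommRing ↥(Algebra.adjoin k (Set.range ⇑u)) :=
    Algebra.adjoinCommRingOfComm k hcomm'
  haveI : NoZeroDivisors ↥(Algebra.adjoin k (Set.range ⇑u)) := by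
    constructor
    intro x y hxy
    by_cases hx : (x : Module.End k N) = 0
    · left; exact Subtype.ext hx
    · right
      apply Subtype.ext
      apply LinearMap.ext
      intro w
      apply hinj (x : Module.End k N) x.2 hx
      have hmul : ((x : Module.End k N) * (y : Module.End k N)) = 0 := by
        have := congrArg Subtype.val hxy
        simpa using this
      calc (x : Module.End k N) ((y : Module.End k N) w)
          = ((x : Module.End k N) * (y : Module.End k N)) w := rfl
        _ = (0 : Module.End k N) w := by rw [hmul]
        _ = (x : Module.End k N) ((0 : Module.End k N) w) := by simp
  haveI : Nontrivial ↥(Algebra.adjoin k (Set.range ⇑u)) := by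
    refine ⟨0, 1, fun h => ?_⟩
    obtain ⟨w, hw⟩ := exists_ne (0 : N)
    have h2 : (0 : Module.End k N) = 1 := by simpa using congrArg Subtype.val h
    have := congrArg (fun f : Module.End k N => f w) h2
    simp at this
    exact hw this.symm
  haveI : IsDomain ↥(Algebra.adjoin k (Set.range ⇑u)) :=
    NoZeroDivisors.to_isDomain _
  let u0 : A →* ↥(Algebra.adjoin k (Set.range ⇑u)) :=
    u.codRestrict _ (fun a => Algebra.subset_adjoin ⟨a, rfl⟩)
  obtain ⟨g, hg⟩ := auxCyclic u0.toHomUnits hp (fun a => by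
    rw [← map_pow]
    have h0 : u0 (a ^ p) = 1 := by
      apply Subtype.ext
      show u (a ^ p) = 1
      rw [map_pow]
      exact hup a
    apply Units.ext
    simpa using h0)
  refine ⟨g, fun a => ?_⟩
  obtain ⟨m, hm⟩ := hg a
  refine ⟨m, ?_⟩
  rw [← map_zpow] at hm
  exact congrArg Subtype.val (congrArg Units.val hm)

/-- If `M` is a simple faithful `kG`-module and `A` is an elementary abelian normal
`p`-subgroup of `G` whose centralizer has finite index, then `A` has a subgroup `H` with
`A/H` cyclic such that `H` contains no nontrivial `G`-invariant subgroup. -/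
theorem stmt_18 {k G M : Type*} [Field k] [Group G] [AddCommGroup M] [Module k M]
    (ρ : Representation k G M) (hnt : Nontrivial M)
    (hsimple : ∀ W : Submodule k M, (∀ g : G, ∀ m ∈ W, ρ g m ∈ W) → W = ⊥ ∨ W = ⊤)
    (hfaith : ∀ g : G, (∀ m : M, ρ g m = m) → g = 1)
    (p : ℕ) (hp : p.Prime) (A : Subgroup G) (hAn : A.Normal)
    (hel : ∀ a ∈ A, a ^ p = 1) (hcomm : ∀ a ∈ A, ∀ b ∈ A, a * b = b * a)
    (hfi : (Subgroup.centralizer (A : Set G)).FiniteIndex) :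
    ∃ H : Subgroup G, H ≤ A ∧
      (∃ g ∈ A, ∀ a ∈ A, ∃ m : ℤ, a * (g ^ m)⁻¹ ∈ H) ∧
      ∀ K : Subgroup G, K.Normal → K ≤ H → K = ⊥ := by
  classical
  obtain ⟨m0, hm0⟩ := exists_ne (0 : M)
  set C := Subgroup.centralizer (A : Set G) with hCdef
  have hAC : A ≤ C := fun a ha => Subgroup.mem_centralizer_iff.mpr
    (fun b hb => hcomm b hb a ha)
  have hCn : C.Normal := by
    constructor
    intro c hc g
    rw [Subgroup.mem_centralizer_iff]
    intro a ha
    have ha' : g⁻¹ * a * g ∈ A := by simpa using hAn.conj_mem a ha g⁻¹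
    have hcc := Subgroup.mem_centralizer_iff.mp hc _ ha'
    calc a * (g * c * g⁻¹) = g * ((g⁻¹ * a * g) * c) * g⁻¹ := by group
      _ = g * (c * (g⁻¹ * a * g)) * g⁻¹ := by rw [hcc]
      _ = (g * c * g⁻¹) * a := by group
  -- basic computation lemmas
  have hcomp : ∀ (x y : G) (m : M), ρ (x * y) m = ρ x (ρ y m) := by
    intro x y m; rw [map_mul]; rfl
  have hrinv : ∀ (g : G) (m : M), ρ g⁻¹ (ρ g m) = m := by
    intro g m; rw [← hcomp]; simp
  have hrinv2 : ∀ (g : G) (m : M), ρ g (ρ g⁻¹ m) = m := by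
    intro g m; rw [← hcomp]; simp
  -- the span of the orbit of m0 is everything
  have hinvG : ∀ g : G, ∀ m ∈ Submodule.span k (Set.range fun g : G => ρ g m0),
      ρ g m ∈ Submodule.span k (Set.range fun g : G => ρ g m0) := by
    intro g m hm
    have hle : Submodule.map (ρ g) (Submodule.span k (Set.range fun g : G => ρ g m0)) ≤
        Submodule.span k (Set.range fun g : G => ρ g m0) := by
      rw [Submodule.map_span]
      refine Submodule.span_le.mpr ?_
      rintro _ ⟨_, ⟨h', rfl⟩, rfl⟩
      exact Submodule.subset_span ⟨g * h', by simpa using hcomp g h' m0⟩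
    exact hle ⟨m, hm, rfl⟩
  have hspanG : Submodule.span k (Set.range fun g : G => ρ g m0) = ⊤ := by
    rcases hsimple _ hinvG with h | h
    · exfalso
      have hmem : m0 ∈ Submodule.span k (Set.range fun g : G => ρ g m0) :=
        Submodule.subset_span ⟨1, by simp⟩
      rw [h] at hmem
      exact hm0 (by simpa using hmem)
    · exact h
  haveI := hfi
  haveI : Finite (G ⧸ C) := Subgroup.finite_quotient_of_finiteIndex (H := C)
  haveI : Fintype (G ⧸ C) := Fintype.ofFinite _
  -- a C-invariant submodule containing all translates generates
  have hgenV : ∀ V : Submodule k M, (∀ c ∈ C, ∀ m ∈ V, ρ c m ∈ V) →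
      (∀ q : G ⧸ C, ρ (Quotient.out q) m0 ∈ V) → V = ⊤ := by
    intro V hV hq
    rw [← top_le_iff, ← hspanG]
    refine Submodule.span_le.mpr ?_
    rintro _ ⟨g, rfl⟩
    set t := Quotient.out (QuotientGroup.mk (s := C) g) with ht
    have htg : t⁻¹ * g ∈ C := by
      rw [← QuotientGroup.eq]
      exact QuotientGroup.out_eq' _
    have hc : g * t⁻¹ ∈ C := by
      have heq : g * t⁻¹ = t * (t⁻¹ * g) * t⁻¹ := by group
      rw [heq]; exact hCn.conj_mem _ htg t
    have heq2 : ρ g m0 = ρ (g * t⁻¹) (ρ t m0) := by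
      rw [← hcomp]; congr 1; group
    have hfin : ρ g m0 ∈ V := by rw [heq2]; exact hV _ hc _ (hq _)
    exact hfin
  -- Zorn: maximal proper C-invariant submodule V
  have hbotS : (∀ c ∈ C, ∀ m ∈ (⊥ : Submodule k M), ρ c m ∈ (⊥ : Submodule k M)) ∧
      (⊥ : Submodule k M) ≠ ⊤ := by
    constructor
    · intro c hc m hm
      simp only [Submodule.mem_bot] at hm ⊢
      rw [hm, map_zero]
    · intro h
      have : m0 ∈ (⊥ : Submodule k M) := h ▸ Submodule.mem_top
      exact hm0 (by simpa using this)
  obtain ⟨V, -, hVmax⟩ := zorn_le_nonempty₀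
    {V : Submodule k M | (∀ c ∈ C, ∀ m ∈ V, ρ c m ∈ V) ∧ V ≠ ⊤} (by
    intro c hcS hchain y hy
    refine ⟨sSup c, ⟨?_, ?_⟩, fun z hz => le_sSup hz⟩
    · intro g hg m hm
      obtain ⟨Vz, hVz, hmVz⟩ :=
        (Submodule.mem_sSup_of_directed ⟨y, hy⟩ hchain.directedOn).mp hm
      exact le_sSup hVz ((hcS hVz).1 g hg m hmVz)
    · intro htop
      have hq : ∀ q : G ⧸ C, ∃ Vq ∈ c, ρ (Quotient.out q) m0 ∈ Vq := fun q =>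
        (Submodule.mem_sSup_of_directed ⟨y, hy⟩ hchain.directedOn).mp
          (htop ▸ Submodule.mem_top)
      choose Vq hVqc hVqm using hq
      obtain ⟨Vstar, hVstarR, hstar⟩ : ∃ a ∈ Set.range Vq, ∀ a' ∈ Set.range Vq, a ≤ a' → a = a' := by
        obtain ⟨a, ha, hmax⟩ := Set.Finite.exists_maximalFor id (Set.range Vq) (Set.finite_range _)
          ⟨Vq (QuotientGroup.mk 1), ⟨_, rfl⟩⟩
        exact ⟨a, ha, fun a' ha' h => le_antisymm h (hmax ha' h)⟩
      have hVstarc : Vstar ∈ c := by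
        obtain ⟨q, rfl⟩ := hVstarR; exact hVqc q
      have hall : ∀ q : G ⧸ C, ρ (Quotient.out q) m0 ∈ Vstar := by
        intro q
        rcases hchain.total (hVqc q) hVstarc with h | h
        · exact h (hVqm q)
        · have heq : Vstar = Vq q := hstar _ ⟨q, rfl⟩ h
          rw [heq]; exact hVqm q
      exact (hcS hVstarc).2 (hgenV Vstar (hcS hVstarc).1 hall)) ⊥ hbotS
  have hVS := hVmax.prop
  -- translates of V
  have hVtinv : ∀ t : G, ∀ c ∈ C, ∀ m ∈ Submodule.map (ρ t) V,
      ρ c m ∈ Submodule.map (ρ t) V := by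
    rintro t c hc _ ⟨v, hv, rfl⟩
    have h1 : t⁻¹ * c * t ∈ C := by simpa using hCn.conj_mem c hc t⁻¹
    refine ⟨ρ (t⁻¹ * c * t) v, hVS.1 _ h1 v hv, ?_⟩
    rw [← hcomp, ← hcomp]; congr 1; group
  have hmapmap : ∀ (t : G) (Y : Submodule k M),
      Submodule.map (ρ t) (Submodule.map (ρ t⁻¹) Y) = Y := by
    intro t Y
    apply le_antisymm
    · rintro _ ⟨_, ⟨y, hy, rfl⟩, rfl⟩
      rw [hrinv2]; exact hy
    · intro y hy
      exact ⟨ρ t⁻¹ y, ⟨y, hy, rfl⟩, hrinv2 t y⟩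
  have hVtcoset : ∀ s t : G, (QuotientGroup.mk s : G ⧸ C) = QuotientGroup.mk t →
      Submodule.map (ρ s) V = Submodule.map (ρ t) V := by
    intro s t hst
    have hc : s⁻¹ * t ∈ C := QuotientGroup.eq.mp hst
    have hVc : Submodule.map (ρ (s⁻¹ * t)) V = V := by
      apply le_antisymm
      · rintro _ ⟨v, hv, rfl⟩; exact hVS.1 _ hc v hv
      · intro v hv
        refine ⟨ρ (s⁻¹ * t)⁻¹ v, hVS.1 _ (inv_mem hc) v hv, hrinv2 _ v⟩
    have : Submodule.map (ρ t) V = Submodule.map (ρ (s * (s⁻¹ * t))) V := by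
      congr 1; group
    rw [this]
    symm
    calc Submodule.map (ρ (s * (s⁻¹ * t))) V
        = Submodule.map (ρ s) (Submodule.map (ρ (s⁻¹ * t)) V) := by
          apply le_antisymm
          · rintro _ ⟨v, hv, rfl⟩
            exact ⟨ρ (s⁻¹ * t) v, ⟨v, hv, rfl⟩, (hcomp _ _ _).symm⟩
          · rintro _ ⟨_, ⟨v, hv, rfl⟩, rfl⟩
            exact ⟨v, hv, hcomp _ _ _⟩
      _ = Submodule.map (ρ s) V := by rw [hVc]
  have hVtne : ∀ t : G, Submodule.map (ρ t) V ≠ ⊤ := by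
    intro t htop
    apply hVS.2
    rw [eq_top_iff]
    intro x _
    have hx : ρ t x ∈ Submodule.map (ρ t) V := htop ▸ Submodule.mem_top
    obtain ⟨v, hv, hveq⟩ := hx
    have hvx : v = x := by
      have h2 : ρ t⁻¹ (ρ t v) = ρ t⁻¹ (ρ t x) := by rw [hveq]
      rwa [hrinv, hrinv] at h2
    exact hvx ▸ hv
  have hVtmax : ∀ (t : G) (Y : Submodule k M), (∀ c ∈ C, ∀ m ∈ Y, ρ c m ∈ Y) →
      Submodule.map (ρ t) V ≤ Y → Y ≠ ⊤ → Y = Submodule.map (ρ t) V := by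
    intro t Y hYinv hle hne
    have hZinv : ∀ c ∈ C, ∀ m ∈ Submodule.map (ρ t⁻¹) Y,
        ρ c m ∈ Submodule.map (ρ t⁻¹) Y := by
      rintro c hc _ ⟨y, hy, rfl⟩
      have h1 : t * c * t⁻¹ ∈ C := hCn.conj_mem c hc t
      refine ⟨ρ (t * c * t⁻¹) y, hYinv _ h1 y hy, ?_⟩
      rw [← hcomp, ← hcomp]; congr 1; group
    have hVle : V ≤ Submodule.map (ρ t⁻¹) Y := by
      intro v hv
      exact ⟨ρ t v, hle ⟨v, hv, rfl⟩, hrinv t v⟩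
    have hZne : Submodule.map (ρ t⁻¹) Y ≠ ⊤ := by
      intro h
      apply hne
      rw [eq_top_iff]
      intro x _
      rw [← hmapmap t Y]
      exact ⟨ρ t⁻¹ x, h ▸ Submodule.mem_top, hrinv2 t x⟩
    have hZV : Submodule.map (ρ t⁻¹) Y = V :=
      le_antisymm (hVmax.2 ⟨hZinv, hZne⟩ hVle) hVle
    calc Y = Submodule.map (ρ t) (Submodule.map (ρ t⁻¹) Y) := (hmapmap t Y).symm
      _ = Submodule.map (ρ t) V := by rw [hZV]
  -- finite intersections of translates
  have hfuniv :
      (Finset.univ.inf fun q : G ⧸ C => Submodule.map (ρ (Quotient.out q)) V) = ⊥ := by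
    have hGinv : ∀ g : G, ∀ m ∈ (Finset.univ.inf fun q : G ⧸ C =>
        Submodule.map (ρ (Quotient.out q)) V),
        ρ g m ∈ (Finset.univ.inf fun q : G ⧸ C => Submodule.map (ρ (Quotient.out q)) V) := by
      intro g m hm
      rw [Submodule.mem_finsetInf] at hm ⊢
      intro q _
      have h1 : m ∈ Submodule.map (ρ (Quotient.out
          (QuotientGroup.mk (g⁻¹ * Quotient.out q) : G ⧸ C))) V :=
        hm _ (Finset.mem_univ _)
      rw [hVtcoset _ (g⁻¹ * Quotient.out q) (QuotientGroup.out_eq' _)] at h1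
      obtain ⟨v, hv, rfl⟩ := h1
      refine ⟨v, hv, ?_⟩
      rw [← hcomp]; congr 1; group
    rcases hsimple _ hGinv with h | h
    · exact h
    · exfalso
      have hle := Finset.inf_le (f := fun q : G ⧸ C => Submodule.map (ρ (Quotient.out q)) V)
        (Finset.mem_univ (QuotientGroup.mk 1))
      rw [h] at hle
      exact hVtne _ (top_le_iff.mp hle)
  have hbotTop : (⊤ : Submodule k M) ≠ (⊥ : Submodule k M) := by
    intro h
    have : m0 ∈ (⊥ : Submodule k M) := h ▸ Submodule.mem_top
    exact hm0 (by simpa using this)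
  obtain ⟨s, hsP, hsmax⟩ := Finset.exists_max_image
    (Finset.univ.filter (fun s : Finset (G ⧸ C) =>
      (s.inf fun q => Submodule.map (ρ (Quotient.out q)) V) ≠ ⊥))
    (fun s => s.card)
    ⟨∅, Finset.mem_filter.mpr ⟨Finset.mem_univ _, by
      rw [Finset.inf_empty]; exact hbotTop⟩⟩
  have hfs : (s.inf fun q => Submodule.map (ρ (Quotient.out q)) V) ≠ ⊥ :=
    (Finset.mem_filter.mp hsP).2
  have hsne : s ≠ Finset.univ := by
    rintro rfl; exact hfs hfuniv
  obtain ⟨q0, hq0⟩ : ∃ q0, q0 ∉ s := by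
    by_contra h
    push_neg at h
    exact hsne (Finset.eq_univ_iff_forall.mpr h)
  have hins : ((insert q0 s).inf fun q => Submodule.map (ρ (Quotient.out q)) V) = ⊥ := by
    by_contra h
    have hmem : insert q0 s ∈ Finset.univ.filter (fun s : Finset (G ⧸ C) =>
        (s.inf fun q => Submodule.map (ρ (Quotient.out q)) V) ≠ ⊥) :=
      Finset.mem_filter.mpr ⟨Finset.mem_univ _, h⟩
    have := hsmax _ hmem
    rw [Finset.card_insert_of_notMem hq0] at this
    omega
  rw [Finset.inf_insert] at hins
  set W : Submodule k M := s.inf fun q => Submodule.map (ρ (Quotient.out q)) V with hWdef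
  set t0 : G := Quotient.out q0 with ht0
  -- W facts
  have hWne : W ≠ ⊥ := hfs
  have hWinv : ∀ c ∈ C, ∀ m ∈ W, ρ c m ∈ W := by
    intro c hc m hm
    rw [hWdef, Submodule.mem_finsetInf] at hm ⊢
    intro q hq
    exact hVtinv _ c hc m (hm q hq)
  have hWV0 : Submodule.map (ρ t0) V ⊓ W = ⊥ := hins
  have hWsimple : ∀ Y : Submodule k M, (∀ c ∈ C, ∀ m ∈ Y, ρ c m ∈ Y) →
      Y ≤ W → Y ≠ ⊥ → Y = W := by
    intro Y hYinv hYW hYne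
    have hsup : Y ⊔ Submodule.map (ρ t0) V = ⊤ := by
      by_contra hne
      have hinv : ∀ c ∈ C, ∀ m ∈ Y ⊔ Submodule.map (ρ t0) V,
          ρ c m ∈ Y ⊔ Submodule.map (ρ t0) V := by
        intro c hc m hm
        rcases Submodule.mem_sup.mp hm with ⟨y, hy, v, hv, rfl⟩
        rw [map_add]
        exact Submodule.add_mem_sup (hYinv c hc y hy) (hVtinv t0 c hc v hv)
      have heq := hVtmax t0 _ hinv le_sup_right hne
      have hYle : Y ≤ Submodule.map (ρ t0) V := heq ▸ le_sup_left
      have hYbot : Y ≤ ⊥ := by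
        rw [← hWV0]
        exact le_inf hYle hYW
      exact hYne (le_bot_iff.mp hYbot)
    have hmod := sup_inf_assoc_of_le (Submodule.map (ρ t0) V) hYW
    rw [hsup, hWV0, top_inf_eq, sup_bot_eq] at hmod
    exact hmod.symm
  haveI hWnt : Nontrivial ↥W := Submodule.nontrivial_iff_ne_bot.mpr hWne
  -- restriction of the action of C to W
  let rf : ↥C → Module.End k ↥W := fun c =>
    LinearMap.restrict (ρ (c : G)) (fun m hm => hWinv _ c.2 m hm)
  have rf_apply : ∀ (c : ↥C) (w : ↥W), ((rf c w : ↥W) : M) = ρ (c : G) (w : M) :=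
    fun c w => LinearMap.restrict_coe_apply _ _ _
  have rf_mul : ∀ c d : ↥C, rf (c * d) = rf c * rf d := by
    intro c d
    apply LinearMap.ext; intro w; apply Subtype.ext
    rw [Module.End.mul_apply, rf_apply, rf_apply, rf_apply, Subgroup.coe_mul, hcomp]
  have rf_one : rf 1 = 1 := by
    apply LinearMap.ext; intro w; apply Subtype.ext
    rw [rf_apply]
    simp
  -- the action of A on W as a monoid hom into End(W)
  let uA : ↥A →* Module.End k ↥W :=
  { toFun := fun a => rf ⟨(a : G), hAC a.2⟩
    map_one' := by
      have h1 : (⟨((1 : ↥A) : G), hAC (1 : ↥A).2⟩ : ↥C) = 1 := by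
        apply Subtype.ext; simp
      show rf _ = 1
      rw [h1, rf_one]
    map_mul' := by
      intro a b
      have h1 : (⟨((a * b : ↥A) : G), hAC (a * b : ↥A).2⟩ : ↥C) =
          (⟨(a : G), hAC a.2⟩ : ↥C) * ⟨(b : G), hAC b.2⟩ := by
        apply Subtype.ext; simp
      show rf _ = rf _ * rf _
      rw [h1, rf_mul] }
  have uA_commS : ∀ a b : ↥A, uA a * uA b = uA b * uA a := by
    intro a b
    show rf _ * rf _ = rf _ * rf _
    rw [← rf_mul, ← rf_mul]
    congr 1
    apply Subtype.ext
    show (a : G) * (b : G) = (b : G) * (a : G)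
    exact hcomm _ a.2 _ b.2
  have hcentral : ∀ x ∈ Algebra.adjoin k (Set.range ⇑uA),
      ∀ c : ↥C, x * rf c = rf c * x := by
    intro x hx c
    have hsub : Set.range ⇑uA ⊆ Subalgebra.centralizer k (Set.range rf) := by
      rintro _ ⟨a, rfl⟩
      refine (Subalgebra.mem_centralizer_iff _).mpr ?_
      rintro _ ⟨d, rfl⟩
      show rf _ * rf _ = rf _ * rf _
      rw [← rf_mul, ← rf_mul]
      congr 1
      apply Subtype.ext
      show (d : G) * (a : G) = (a : G) * (d : G)
      exact (Subgroup.mem_centralizer_iff.mp d.2 _ a.2).symm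
    have hx' := Algebra.adjoin_le hsub hx
    exact ((Subalgebra.mem_centralizer_iff _).mp hx' (rf c) ⟨c, rfl⟩).symm
  have hinjR : ∀ x : Module.End k ↥W, x ∈ Algebra.adjoin k (Set.range ⇑uA) →
      x ≠ 0 → Function.Injective x := by
    intro x hx hx0
    rw [← LinearMap.ker_eq_bot]
    by_contra hker
    have hKinv : ∀ c ∈ C, ∀ m ∈ Submodule.map W.subtype (LinearMap.ker x),
        ρ c m ∈ Submodule.map W.subtype (LinearMap.ker x) := by
      rintro c hc _ ⟨w, hw, rfl⟩
      refine ⟨rf ⟨c, hc⟩ w, ?_, rf_apply ⟨c, hc⟩ w⟩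
      show x (rf ⟨c, hc⟩ w) = 0
      have hcx : x (rf ⟨c, hc⟩ w) = rf ⟨c, hc⟩ (x w) := by
        rw [← Module.End.mul_apply, hcentral x hx ⟨c, hc⟩, Module.End.mul_apply]
      rw [hcx, LinearMap.mem_ker.mp hw, map_zero]
    have hKW : Submodule.map W.subtype (LinearMap.ker x) ≤ W := by
      rintro _ ⟨w, _, rfl⟩; exact w.2
    have hKne : Submodule.map W.subtype (LinearMap.ker x) ≠ ⊥ := by
      intro h
      apply hker
      rw [eq_bot_iff]
      intro w hw
      have hwK : (w : M) ∈ Submodule.map W.subtype (LinearMap.ker x) := ⟨w, hw, rfl⟩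
      rw [h] at hwK
      have hw0 : (w : M) = 0 := by simpa using hwK
      simp only [Submodule.mem_bot]
      exact Subtype.ext hw0
    have hKeqW := hWsimple _ hKinv hKW hKne
    apply hx0
    apply LinearMap.ext
    intro w
    have hwK : (w : M) ∈ Submodule.map W.subtype (LinearMap.ker x) := hKeqW.symm ▸ w.2
    obtain ⟨w', hw', hww⟩ := hwK
    have hww' : w' = w := Subtype.ext hww
    rw [← hww']
    simpa using LinearMap.mem_ker.mp hw'
  obtain ⟨g0, hg0⟩ := auxDomainCyclic uA uA_commS hinjR hp.pos (fun a => by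
    rw [← map_pow]
    have ha : a ^ p = 1 := by
      apply Subtype.ext
      rw [SubmonoidClass.coe_pow]
      exact hel _ a.2
    rw [ha, map_one])
  -- agreement of actions on W
  have hagree : ∀ a b : ↥A, uA a = uA b → ∀ w ∈ W, ρ (a : G) w = ρ (b : G) w := by
    intro a b h w hw
    have h1 := rf_apply ⟨(a : G), hAC a.2⟩ ⟨w, hw⟩
    have h2 := rf_apply ⟨(b : G), hAC b.2⟩ ⟨w, hw⟩
    have h3 := congrArg (fun f : Module.End k ↥W => ((f ⟨w, hw⟩ : ↥W) : M)) h
    rw [← h1, ← h2]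
    exact h3
  -- the subgroup H
  refine ⟨{ carrier := {x : G | x ∈ A ∧ ∀ w ∈ W, ρ x w = w}
            one_mem' := ⟨A.one_mem, fun w _ => by rw [map_one]; rfl⟩
            mul_mem' := fun {x y} hx hy => ⟨A.mul_mem hx.1 hy.1, fun w hw => by
              rw [hcomp, hy.2 w hw, hx.2 w hw]⟩
            inv_mem' := fun {x} hx => ⟨A.inv_mem hx.1, fun w hw => by
              have h1 : ρ x⁻¹ w ∈ W := hWinv _ (hAC (A.inv_mem hx.1)) w hw
              have h2 := hx.2 _ h1
              rw [hrinv2] at h2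
              exact h2.symm⟩ }, fun x hx => hx.1, ⟨(g0 : G), g0.2, ?_⟩, ?_⟩
  · -- cyclic quotient
    intro a ha
    obtain ⟨m, hm⟩ := hg0 ⟨a, ha⟩
    refine ⟨m, A.mul_mem ha (A.inv_mem (A.zpow_mem g0.2 m)), ?_⟩
    intro w hw
    have hco : ((g0 ^ m : ↥A) : G) = (g0 : G) ^ m := by
      push_cast
      ring_nf
    have hfix := hagree _ _ hm
    rw [hcomp]
    have h1 : ρ ((g0 : G) ^ m)⁻¹ w ∈ W :=
      hWinv _ (hAC (A.inv_mem (A.zpow_mem g0.2 m))) w hw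
    calc ρ a (ρ ((g0 : G) ^ m)⁻¹ w)
        = ρ ((g0 : G) ^ m) (ρ ((g0 : G) ^ m)⁻¹ w) := by
          have h2 := hfix _ h1
          rwa [hco] at h2
      _ = w := hrinv2 _ w
  · -- no nontrivial G-invariant subgroup inside H
    intro K hKn hKH
    let CM : Submodule k M :=
    { carrier := {m : M | ∀ x ∈ K, ρ x m = m}
      zero_mem' := fun {x} hx => map_zero _
      add_mem' := fun {m1 m2} h1 h2 x hx => by rw [map_add, h1 x hx, h2 x hx]
      smul_mem' := fun c {m} hmem x hx => by rw [map_smul, hmem x hx] }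
    have hCMinv : ∀ g : G, ∀ m ∈ CM, ρ g m ∈ CM := by
      intro g m hm x hxK
      have hk : g⁻¹ * x * g ∈ K := by simpa using hKn.conj_mem x hxK g⁻¹
      calc ρ x (ρ g m) = ρ g (ρ (g⁻¹ * x * g) m) := by
            rw [← hcomp, ← hcomp]; congr 1; group
        _ = ρ g m := by rw [hm _ hk]
    rcases hsimple _ hCMinv with h | h
    · exfalso
      apply hWne
      rw [eq_bot_iff, ← h]
      intro w hw x hxK
      exact (hKH hxK).2 w hw
    · rw [Subgroup.eq_bot_iff_forall]
      intro x hxK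
      apply hfaith
      intro m
      have hm : m ∈ CM := h ▸ Submodule.mem_top
      exact hm x hxK
end
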